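/- Let μ₁ and μ₂ be trigonometric polynomials with deg(μ₁) = (K₁, L₁) and deg(μ₂) = (K₂, L₂). If there is no trigonometric polynomial of positive degree dividing both μ₁ and μ₂, then the set of common zeros {r ∈ [0,1)² : μ₁(r) = μ₂(r) = 0} has at most (K₁ + L₁)(K₂ + L₂) elements. -/

import Mathlib

open MeasureTheory Set
open scoped Pointwise

noncomputable section

/-- The unit square `[0,1]²`. -/
def box : Set (ℝ × ℝ) := Set.Icc (0:ℝ) 1 ×ˢ Set.Icc (0:ℝ) 1

/-- The complex exponential `e^{2πi k·r}` with integer frequency `k`. -/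
def e2 (k : ℤ × ℤ) (r : ℝ × ℝ) : ℂ :=
  Complex.exp (2 * Real.pi * Complex.I * ((k.1 : ℂ) * (r.1 : ℂ) + (k.2 : ℂ) * (r.2 : ℂ)))

/-- The trigonometric sum with coefficient support `Λ` and coefficients `c`. -/
def trigSum (Λ : Finset (ℤ × ℤ)) (c : ℤ × ℤ → ℂ) : (ℝ × ℝ) → ℂ :=
  fun r => ∑ k ∈ Λ, c k * e2 k r

/-- The Fourier coefficient `f̂[m] = ∫_{[0,1]²} f(r) e^{-2πi m·r} dr`. -/
def fourierCoeff2 (f : ℝ × ℝ → ℂ) (m : ℤ × ℤ) : ℂ :=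
  ∫ r in box, f r * Complex.exp (-(2 * Real.pi * Complex.I *
    ((m.1 : ℂ) * (r.1 : ℂ) + (m.2 : ℂ) * (r.2 : ℂ))))

/-- `d` (supported on `Λ`) satisfies the annihilation equation for `f` at `ℓ`:
`∑_{k ∈ Λ} d[k] ⋅ 2πi (ℓ-k)_x ⋅ f̂[ℓ-k] = 0` and likewise for the `y`-component. -/
def Annihilates (Λ : Finset (ℤ × ℤ)) (d : ℤ × ℤ → ℂ) (f : ℝ × ℝ → ℂ) (ℓ : ℤ × ℤ) : Prop :=
  (∑ k ∈ Λ, d k * (2 * Real.pi * Complex.I * (((ℓ - k).1 : ℂ))) * fourierCoeff2 f (ℓ - k)) = 0 ∧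
  (∑ k ∈ Λ, d k * (2 * Real.pi * Complex.I * (((ℓ - k).2 : ℂ))) * fourierCoeff2 f (ℓ - k)) = 0

/-- `μ` is a (integer-frequency) trigonometric polynomial: a nonzero finite sum
`∑_{k ∈ Λ} c[k] e^{2πi k·r}`. -/
def IsTrigPolyFn (μ : ℝ × ℝ → ℂ) : Prop :=
  (∃ (Λ : Finset (ℤ × ℤ)) (c : ℤ × ℤ → ℂ), μ = trigSum Λ c) ∧ μ ≠ 0

/-- The zero set of `μ` in `[0,1]²`. -/
def zeroSetOn (μ : ℝ × ℝ → ℂ) : Set (ℝ × ℝ) := {r | r ∈ box ∧ μ r = 0}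

/-- `γ` divides `μ` among trigonometric polynomials. -/
def TrigDivides (γ μ : ℝ × ℝ → ℂ) : Prop :=
  ∃ η : ℝ × ℝ → ℂ, IsTrigPolyFn η ∧ μ = fun r => γ r * η r

/-- `C` is a trigonometric curve: the zero set in `[0,1]²` of a trigonometric polynomial,
infinite and with no isolated points. -/
def IsTrigCurve (C : Set (ℝ × ℝ)) : Prop :=
  (∃ μ : ℝ × ℝ → ℂ, IsTrigPolyFn μ ∧ C = zeroSetOn μ) ∧ C.Infinite ∧
    ∀ x ∈ C, AccPt x (Filter.principal C)

/-- `μ` is a minimal polynomial of the trigonometric curve `C`: a real-valued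
trigonometric polynomial whose zero set in `[0,1]²` is `C` and which divides every
trigonometric polynomial vanishing on `C`. -/
def IsMinPoly (μ : ℝ × ℝ → ℂ) (C : Set (ℝ × ℝ)) : Prop :=
  IsTrigPolyFn μ ∧ (∀ r, (μ r).im = 0) ∧ C = zeroSetOn μ ∧
    ∀ ν : ℝ × ℝ → ℂ, IsTrigPolyFn ν → (∀ r ∈ C, ν r = 0) → TrigDivides μ ν

/-- The contraction `Λ' ⊖ Λ = {ℓ : ℓ + k ∈ Λ' for all k ∈ Λ}` (as a finset; for
nonempty `Λ` this agrees with the set-theoretic contraction). -/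
def shrink (Λ' Λ : Finset (ℤ × ℤ)) : Finset (ℤ × ℤ) :=
  (Λ' - Λ).filter fun ℓ => ∀ k ∈ Λ, ℓ + k ∈ Λ'

/-- The degree of a trigonometric polynomial given by coefficients `c` on `Λ`: the side
lengths of the smallest closed axis-aligned rectangle containing the frequency support
`{k ∈ Λ : c[k] ≠ 0}`. -/
def degOf (Λ : Finset (ℤ × ℤ)) (c : ℤ × ℤ → ℂ) : ℤ × ℤ :=
  ((WithBot.unbotD 0 ((Λ.filter fun k => c k ≠ 0).image Prod.fst).max)
      - (WithTop.untopD 0 ((Λ.filter fun k => c k ≠ 0).image Prod.fst).min),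
   (WithBot.unbotD 0 ((Λ.filter fun k => c k ≠ 0).image Prod.snd).max)
      - (WithTop.untopD 0 ((Λ.filter fun k => c k ≠ 0).image Prod.snd).min))


/-!
Shifting the frequencies so that the lower-left corner `a` of the frequency support sits at the
origin writes `μ(r) = e(a·r) P(e(r₁), e(r₂))` with `e(x) = exp(2πix)` and `P ∈ ℂ[x][y]` of total
degree at most `K + L`, divisible neither by `x` nor by `y`. A common non-unit factor of `P₁` and
`P₂` therefore has at least two monomials, and turns back into a common trigonometric factor of
positive degree; so `P₁` and `P₂` are coprime. As `r ↦ (e(r₁), e(r₂))` is injective on `[0,1)²`,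
it remains to bound the common zeros of `P₁, P₂` in `ℂ²`, which is Bézout's bound: after a generic
shear `x ↦ x + t y` the first coordinate separates the common zeros, and these first coordinates
are roots of the resultant with respect to `y`, a nonzero polynomial of degree at most
`deg P₁ · deg P₂`.
-/

open Polynomial Polynomial.Bivariate

theorem Set.finite_and_ncard_le_of_forall_finset_card_le {α : Type*} {s : Set α} {n : ℕ}
    (h : ∀ t : Finset α, ↑t ⊆ s → t.card ≤ n) : s.Finite ∧ s.ncard ≤ n := by
  have hs : s.Finite := by
    by_contra hs
    obtain ⟨t, hts, htn⟩ := Set.Infinite.exists_subset_card_eq hs (n + 1)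
    have := h t hts
    omega
  exact ⟨hs, by simpa [Set.ncard_eq_toFinset_card s hs] using h hs.toFinset (by simp)⟩

theorem Matrix.natDegree_det_le {R ι : Type*} [CommRing R] [Fintype ι] [DecidableEq ι]
    (M : Matrix ι ι R[X]) (a b : ι → ℕ)
    (h : ∀ i j, M i j ≠ 0 → (M i j).natDegree + b i ≤ a j) :
    M.det.natDegree ≤ ∑ j, a j - ∑ i, b i := by
  rw [Matrix.det_apply]
  refine natDegree_sum_le_of_forall_le _ _ fun σ _ => ?_
  by_cases hσ : ∀ j, M (σ j) j ≠ 0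
  · have key : ∑ j, (M (σ j) j).natDegree + ∑ i, b i ≤ ∑ j, a j := by
      rw [← Equiv.sum_comp σ b, ← Finset.sum_add_distrib]
      exact Finset.sum_le_sum fun j _ => h _ _ (hσ j)
    calc (Equiv.Perm.sign σ • ∏ j, M (σ j) j).natDegree
        ≤ (∏ j, M (σ j) j).natDegree := natDegree_smul_le _ _
      _ ≤ ∑ j, (M (σ j) j).natDegree := natDegree_prod_le _ _
      _ ≤ ∑ j, a j - ∑ i, b i := by omega
  · obtain ⟨j, hj⟩ := not_forall_not.1 hσ
    rw [Finset.prod_eq_zero (f := fun i => M (σ i) i) (Finset.mem_univ j) hj, smul_zero,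
      natDegree_zero]
    exact Nat.zero_le _

theorem MvPolynomial.totalDegree_aeval_le {σ τ R : Type*} [CommSemiring R]
    {f : σ → MvPolynomial τ R} (hf : ∀ i, (f i).totalDegree ≤ 1) (p : MvPolynomial σ R) :
    (aeval f p).totalDegree ≤ p.totalDegree := by
  rw [aeval_def, eval₂_eq]
  refine totalDegree_finsetSum_le fun d hd => (totalDegree_mul _ _).trans ?_
  rw [algebraMap_eq, totalDegree_C, zero_add]
  refine (totalDegree_finsetProd _ _).trans ((Finset.sum_le_sum fun i _ => ?_).trans
    (le_totalDegree hd))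
  exact (totalDegree_pow _ _).trans (by simpa using Nat.mul_le_mul_left (d i) (hf i))

namespace Polynomial.Bivariate

section CommSemiring

variable {R : Type*} [CommSemiring R]

def totalDegree (P : R[X][Y]) : ℕ := (equivMvPolynomial R P).totalDegree

theorem equivMvPolynomial_monomial_monomial (n k : ℕ) (a : R) :
    equivMvPolynomial R (monomial n (monomial k a)) =
      MvPolynomial.monomial (Finsupp.single 0 k + Finsupp.single 1 n) a := by
  rw [← C_mul_X_pow_eq_monomial, ← C_mul_X_pow_eq_monomial]
  simp [MvPolynomial.X_pow_eq_monomial, MvPolynomial.C_mul_monomial, MvPolynomial.monomial_mul]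

theorem coeff_equivMvPolynomial (P : R[X][Y]) (m : Fin 2 →₀ ℕ) :
    (equivMvPolynomial R P).coeff m = (P.coeff (m 1)).coeff (m 0) := by
  induction P using Polynomial.induction_on' with
  | add p q hp hq => simp [hp, hq]
  | monomial n p =>
    induction p using Polynomial.induction_on' with
    | add p q hp hq => simp_all
    | monomial k a =>
      have hm : Finsupp.single 0 k + Finsupp.single 1 n = m ↔ n = m 1 ∧ k = m 0 := by
        simp only [Finsupp.ext_iff, Fin.forall_fin_two, Finsupp.add_apply, Finsupp.single_apply]
        simp [and_comm]
      rw [equivMvPolynomial_monomial_monomial, MvPolynomial.coeff_monomial, coeff_monomial,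
        if_congr hm rfl rfl]
      by_cases hn : n = m 1 <;> simp [hn, coeff_monomial]

theorem le_totalDegree {P : R[X][Y]} {i j : ℕ} (h : (P.coeff j).coeff i ≠ 0) :
    i + j ≤ totalDegree P := by
  have hs : Finsupp.single 0 i + Finsupp.single 1 j ∈ (equivMvPolynomial R P).support := by
    rw [MvPolynomial.mem_support_iff, coeff_equivMvPolynomial]
    simpa using h
  simpa [totalDegree, Finsupp.sum_add_index'] using MvPolynomial.le_totalDegree hs

theorem natDegree_coeff_add_le_totalDegree {P : R[X][Y]} {j : ℕ} (h : P.coeff j ≠ 0) :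
    (P.coeff j).natDegree + j ≤ totalDegree P :=
  le_totalDegree (by rwa [coeff_natDegree, Ne, leadingCoeff_eq_zero])

theorem natDegree_coeff_le_totalDegree (P : R[X][Y]) (j : ℕ) :
    (P.coeff j).natDegree ≤ totalDegree P := by
  rcases eq_or_ne (P.coeff j) 0 with h | h
  · simp [h]
  · exact (Nat.le_add_right _ _).trans (natDegree_coeff_add_le_totalDegree h)

theorem natDegree_le_totalDegree (P : R[X][Y]) : P.natDegree ≤ totalDegree P := by
  rcases eq_or_ne P 0 with rfl | hP
  · simp
  · exact (Nat.le_add_left _ _).trans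
      (natDegree_coeff_add_le_totalDegree (by rwa [coeff_natDegree, Ne, leadingCoeff_eq_zero]))

theorem evalEval_eq_sum_range (P : R[X][Y]) (x y : R) :
    P.evalEval x y = ∑ j ∈ Finset.range (totalDegree P + 1),
      ∑ i ∈ Finset.range (totalDegree P + 1), (P.coeff j).coeff i * x ^ i * y ^ j := by
  rw [evalEval, eval_eq_sum_range' (p := P) (Nat.lt_succ_of_le (natDegree_le_totalDegree P)),
    eval_finsetSum]
  refine Finset.sum_congr rfl fun j _ => ?_
  rw [eval_mul, eval_pow, eval_C,
    eval_eq_sum_range' (p := P.coeff j) (Nat.lt_succ_of_le (natDegree_coeff_le_totalDegree P j)),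
    Finset.sum_mul]

end CommSemiring

section CommRing

variable {R : Type*} [CommRing R]

def shear (t : R) : R[X][Y] ≃ₐ[R] R[X][Y] :=
  AlgEquiv.ofAlgHom (aevalAeval (C X + C (C t) * Y) Y) (aevalAeval (C X - C (C t) * Y) Y)
    (by ext <;> simp) (by ext <;> simp)

theorem evalEval_shear (t z w : R) (P : R[X][Y]) :
    (shear t P).evalEval z w = P.evalEval (z + t * w) w := by
  have : (aevalAeval z w).comp (aevalAeval (C X + C (C t) * Y) Y) =
      aevalAeval (z + t * w) w := by
    ext <;> simp
  rw [← coe_aevalAeval_eq_evalEval, ← coe_aevalAeval_eq_evalEval, ← this]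
  rfl

theorem totalDegree_shear_le (t : R) (P : R[X][Y]) :
    totalDegree (shear t P) ≤ totalDegree P := by
  have hcomp : (equivMvPolynomial R).toAlgHom.comp (shear t).toAlgHom =
      (MvPolynomial.aeval ![.X 0 + .C t * .X 1, .X 1]).comp (equivMvPolynomial R).toAlgHom := by
    ext <;> simp [shear]
  have hX : ∀ i : Fin 2, (MvPolynomial.X i : MvPolynomial (Fin 2) R).totalDegree ≤ 1 :=
    fun i => (MvPolynomial.totalDegree_monomial_le _ _).trans (by simp)
  have h := AlgHom.congr_fun hcomp P
  simp only [AlgHom.comp_apply, AlgEquiv.coe_toAlgHom] at h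
  rw [totalDegree, h]
  refine MvPolynomial.totalDegree_aeval_le (fun i => ?_) _
  fin_cases i
  · refine (MvPolynomial.totalDegree_add _ _).trans (max_le (hX 0) ?_)
    refine (MvPolynomial.totalDegree_mul _ _).trans ?_
    simpa [MvPolynomial.totalDegree_C] using hX 1
  · exact hX 1

end CommRing

theorem isUnit_of_not_X_dvd_of_not_C_X_dvd {K : Type*} [Field K] {d : K[X][Y]}
    (hX : ¬ X ∣ d) (hCX : ¬ C X ∣ d)
    (hmono : ∀ p q : ℕ × ℕ, (d.coeff p.2).coeff p.1 ≠ 0 → (d.coeff q.2).coeff q.1 ≠ 0 → p = q) :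
    IsUnit d := by
  obtain ⟨j₀, hj₀⟩ : ∃ j, (d.coeff j).coeff 0 ≠ 0 := by
    by_contra! h
    exact hCX ((C_dvd_iff_dvd_coeff _ _).2 fun j => X_dvd_iff.2 (h j))
  obtain ⟨i₀, hi₀⟩ : ∃ i, (d.coeff 0).coeff i ≠ 0 := by
    by_contra! h
    exact hX (X_dvd_iff.2 (Polynomial.ext h))
  have hsupp : ∀ i j, (d.coeff j).coeff i ≠ 0 → i = 0 ∧ j = 0 := fun i j hij =>
    ⟨(Prod.ext_iff.1 (hmono (i, j) (0, j₀) hij hj₀)).1,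
      (Prod.ext_iff.1 (hmono (i, j) (i₀, 0) hij hi₀)).2⟩
  have hα : (d.coeff 0).coeff 0 ≠ 0 := by
    obtain ⟨rfl, -⟩ := hsupp i₀ 0 hi₀
    exact hi₀
  have hd : d = C (C ((d.coeff 0).coeff 0)) := by
    refine Polynomial.ext fun j => Polynomial.ext fun i => ?_
    by_cases hij : (d.coeff j).coeff i = 0
    · rw [hij, coeff_C]
      split_ifs with hj
      · subst hj
        rw [coeff_C]
        split_ifs with hi
        · exact absurd (hi ▸ hij) hα
        · rfl
      · rfl
    · obtain ⟨rfl, rfl⟩ := hsupp i j hij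
      simp
  rw [hd]
  exact isUnit_C.2 (isUnit_C.2 hα.isUnit)

end Polynomial.Bivariate

namespace Polynomial

/-- The entry of the Sylvester matrix in row `i` and in the column of the shift by `j` of `g`
(resp. `f`) has degree at most `totalDegree g + j - i` (resp. `totalDegree f + j - i`). -/
theorem natDegree_resultant_le {R : Type*} [CommRing R] (f g : R[X][Y]) (m n : ℕ) :
    (resultant f g m n).natDegree ≤ m * totalDegree g + n * totalDegree f - m * n := by
  have entry : ∀ (P : R[X][Y]) (i j k : ℕ),
      (if i ∈ Set.Icc j (j + k) then P.coeff (i - j) else 0) ≠ 0 →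
        (if i ∈ Set.Icc j (j + k) then P.coeff (i - j) else 0).natDegree + i ≤
          totalDegree P + j := by
    intro P i j k h
    split_ifs at h ⊢ with hij
    · have := natDegree_coeff_add_le_totalDegree h
      have := hij.1
      omega
    · exact absurd rfl h
  refine (Matrix.natDegree_det_le _
    (Fin.addCases (fun j => totalDegree g + j) (fun j => totalDegree f + j)) (fun i => i)
    fun i j => ?_).trans (le_of_eq ?_)
  · induction j using Fin.addCases <;> simpa [sylvester] using entry _ _ _ _
  · simp [Fin.sum_univ_add, Finset.sum_add_distrib]
    rw [Nat.mul_comm n m]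
    omega

theorem natDegree_resultant_le_totalDegree_mul {R : Type*} [CommRing R] (f g : R[X][Y]) :
    (resultant f g).natDegree ≤ totalDegree f * totalDegree g := by
  have hf := natDegree_le_totalDegree f
  have hg := natDegree_le_totalDegree g
  refine (natDegree_resultant_le f g _ _).trans (Nat.sub_le_iff_le_add.2 ?_)
  nlinarith

/-- A kernel vector of the Sylvester matrix gives `f q + g p = 0` with `deg p < deg f`, so `f ∣ p`
forces `p = 0`. -/
theorem resultant_ne_zero_of_isRelPrime {R : Type*} [CommRing R] [IsDomain R]
    [DecompositionMonoid R[X]] {f g : R[X]} (hf : f ≠ 0) (h : IsRelPrime f g) :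
    resultant f g ≠ 0 := by
  intro h0
  let b := ((degreeLT.basis R f.natDegree).prod (degreeLT.basis R g.natDegree)).reindex
    finSumFinEquiv
  obtain ⟨v, hv0, hv⟩ := Matrix.exists_mulVec_eq_zero_iff.2 h0
  have hker : sylvesterMap f g le_rfl le_rfl (b.equivFun.symm v) = 0 := by
    have := LinearMap.toMatrix_mulVec_repr b (degreeLT.basis R _)
      (sylvesterMap f g le_rfl le_rfl) (b.equivFun.symm v)
    rw [toMatrix_sylvesterMap', ← b.equivFun_apply, LinearEquiv.apply_symm_apply, hv,
      eq_comm, Finsupp.coe_eq_zero, LinearEquiv.map_eq_zero_iff] at this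
    exact this
  have hx0 : b.equivFun.symm v ≠ 0 := (LinearEquiv.map_ne_zero_iff _).2 hv0
  generalize b.equivFun.symm v = x at hker hx0
  obtain ⟨⟨p, hp⟩, ⟨q, hq⟩⟩ := x
  have hfg : f * q + g * p = 0 := by simpa using congrArg Subtype.val hker
  have hp0 : p = 0 := by
    refine eq_zero_of_dvd_of_degree_lt (h.dvd_of_dvd_mul_left ⟨-q, by linear_combination hfg⟩) ?_
    rw [degree_eq_natDegree hf]
    exact mem_degreeLT.1 hp
  have hq0 : q = 0 := by simpa [hp0, hf] using hfg
  subst hp0 hq0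
  exact hx0 rfl

theorem eval_resultant_eq_zero {R : Type*} [CommRing R] [Nontrivial R]
    {f g : R[X][Y]} (hfg : IsRelPrime f g) {z w : R} (hf : f.evalEval z w = 0)
    (hg : g.evalEval z w = 0) : (resultant f g).eval z = 0 := by
  by_cases hdeg : f.natDegree ≠ 0 ∨ g.natDegree ≠ 0
  · obtain ⟨p, q, -, -, e⟩ := exists_mul_add_mul_eq_C_resultant f g le_rfl le_rfl hdeg
    simpa [evalEval_mul, evalEval_add, evalEval_C, hf, hg] using (congrArg (evalEval z w) e).symm
  · exfalso
    have hroot : ∀ P : R[X][Y], P.natDegree = 0 → P.evalEval z w = 0 → C (X - C z) ∣ P := by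
      intro P hP hPz
      rw [eq_C_of_natDegree_eq_zero hP, evalEval_C] at hPz
      rw [eq_C_of_natDegree_eq_zero hP]
      obtain ⟨u, hu⟩ := dvd_iff_isRoot.2 hPz
      exact ⟨C u, by rw [hu, C_mul]⟩
    simp only [not_or, not_not] at hdeg
    exact not_isUnit_X_sub_C z <| isUnit_C.1 <| hfg (hroot f hdeg.1 hf) (hroot g hdeg.2 hg)

theorem Bivariate.finite_and_ncard_commonZeros_le {K : Type*} [Field K] [Infinite K]
    {P₁ P₂ : K[X][Y]} (hP₁ : P₁ ≠ 0) (hrel : IsRelPrime P₁ P₂) :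
    {p : K × K | P₁.evalEval p.1 p.2 = 0 ∧ P₂.evalEval p.1 p.2 = 0}.Finite ∧
      {p : K × K | P₁.evalEval p.1 p.2 = 0 ∧ P₂.evalEval p.1 p.2 = 0}.ncard ≤
        totalDegree P₁ * totalDegree P₂ := by
  classical
  refine Set.finite_and_ncard_le_of_forall_finset_card_le fun S hS => ?_
  obtain ⟨t, ht⟩ := Infinite.exists_notMem_finset
    ((S ×ˢ S).image fun pq : (K × K) × (K × K) => (pq.1.1 - pq.2.1) / (pq.1.2 - pq.2.2))
  let ψ : K × K → K := fun p => p.1 - t * p.2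
  have hψ : Set.InjOn ψ S := by
    intro p hp q hq hpq
    by_cases h2 : p.2 = q.2
    · exact Prod.ext (by simpa [ψ, h2] using hpq) h2
    · refine absurd (Finset.mem_image.2 ⟨(p, q), Finset.mem_product.2 ⟨hp, hq⟩, ?_⟩) ht
      rw [div_eq_iff (sub_ne_zero.2 h2)]
      linear_combination hpq
  have hrelQ : IsRelPrime (shear t P₁) (shear t P₂) :=
    IsRelPrime.of_map (shear t).symm (by simpa using hrel)
  have hres : resultant (shear t P₁) (shear t P₂) ≠ 0 :=
    resultant_ne_zero_of_isRelPrime (by simpa using hP₁) hrelQ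
  have hroots : S.image ψ ⊆ (resultant (shear t P₁) (shear t P₂)).roots.toFinset := by
    simp only [Finset.image_subset_iff, Multiset.mem_toFinset, mem_roots hres, IsRoot.def]
    intro p hp
    obtain ⟨h₁, h₂⟩ := hS hp
    refine eval_resultant_eq_zero hrelQ (w := p.2) ?_ ?_ <;>
      simpa [evalEval_shear, ψ]
  calc S.card = (S.image ψ).card := (Finset.card_image_of_injOn hψ).symm
    _ ≤ _ := Finset.card_le_card hroots
    _ ≤ (resultant (shear t P₁) (shear t P₂)).natDegree :=
      (Multiset.toFinset_card_le _).trans (card_roots' _)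
    _ ≤ totalDegree (shear t P₁) * totalDegree (shear t P₂) :=
      natDegree_resultant_le_totalDegree_mul _ _
    _ ≤ totalDegree P₁ * totalDegree P₂ :=
      Nat.mul_le_mul (totalDegree_shear_le _ _) (totalDegree_shear_le _ _)

end Polynomial

def expTwoPiI (x : ℝ) : ℂ := Complex.exp (2 * Real.pi * Complex.I * x)

theorem injOn_expTwoPiI : InjOn expTwoPiI (Ico 0 1) := by
  intro x hx y hy hxy
  obtain ⟨n, hn⟩ := Complex.exp_eq_exp_iff_exists_int.1 hxy
  have hxy' : x = y + n := by
    have h2 : (2 * Real.pi * Complex.I : ℂ) ≠ 0 := by simp [Real.pi_ne_zero, Complex.I_ne_zero]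
    have : (x : ℂ) = y + n := mul_left_cancel₀ h2 (by linear_combination hn)
    exact_mod_cast this
  have hn0 : n = 0 := by
    have h1 : n < 1 := by exact_mod_cast (show (n : ℝ) < 1 by linarith [hx.2, hy.1])
    have h2 : -1 < n := by exact_mod_cast (show (-1 : ℝ) < n by linarith [hx.1, hy.2])
    omega
  simpa [hn0] using hxy'

theorem e2_add (k l : ℤ × ℤ) (r : ℝ × ℝ) : e2 (k + l) r = e2 k r * e2 l r := by
  simp only [e2, ← Complex.exp_add, Prod.fst_add, Prod.snd_add, Int.cast_add]
  ring_nf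

theorem e2_natCast (i j : ℕ) (r : ℝ × ℝ) :
    e2 ((i : ℤ), (j : ℤ)) r = expTwoPiI r.1 ^ i * expTwoPiI r.2 ^ j := by
  simp only [e2, expTwoPiI, ← Complex.exp_nat_mul, ← Complex.exp_add]
  push_cast
  ring_nf

theorem e2_zero (r : ℝ × ℝ) : e2 0 r = 1 := by simp [e2]

theorem e2_ne_zero (k : ℤ × ℤ) (r : ℝ × ℝ) : e2 k r ≠ 0 := Complex.exp_ne_zero _

/-- A box containing `s + (i, j)` for every monomial `x^i y^j` of `q`; `trigCoeffOf q s` vanishes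
at its other points. -/
def trigSupportOf (q : ℂ[X][Y]) (s : ℤ × ℤ) : Finset (ℤ × ℤ) :=
  (Finset.range (totalDegree q + 1) ×ˢ Finset.range (totalDegree q + 1)).image
    fun ij => s + ((ij.1 : ℤ), (ij.2 : ℤ))

def trigCoeffOf (q : ℂ[X][Y]) (s k : ℤ × ℤ) : ℂ :=
  (q.coeff (k.2 - s.2).toNat).coeff (k.1 - s.1).toNat

theorem trigCoeffOf_add_natCast (q : ℂ[X][Y]) (s : ℤ × ℤ) (i j : ℕ) :
    trigCoeffOf q s (s + ((i : ℤ), (j : ℤ))) = (q.coeff j).coeff i := by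
  simp [trigCoeffOf]

theorem trigSum_trigSupportOf (q : ℂ[X][Y]) (s : ℤ × ℤ) (r : ℝ × ℝ) :
    trigSum (trigSupportOf q s) (trigCoeffOf q s) r =
      e2 s r * q.evalEval (expTwoPiI r.1) (expTwoPiI r.2) := by
  rw [trigSum, trigSupportOf, Finset.sum_image fun _ _ _ _ h => Prod.ext_iff.2 (by simpa using h),
    evalEval_eq_sum_range, Finset.sum_product_right, Finset.mul_sum]
  refine Finset.sum_congr rfl fun j _ => ?_
  rw [Finset.mul_sum]
  refine Finset.sum_congr rfl fun i _ => ?_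
  rw [trigCoeffOf_add_natCast, e2_add, e2_natCast]
  ring

def freqSupport (Λ : Finset (ℤ × ℤ)) (c : ℤ × ℤ → ℂ) : Finset (ℤ × ℤ) :=
  Λ.filter fun k => c k ≠ 0

theorem trigSum_freqSupport (Λ : Finset (ℤ × ℤ)) (c : ℤ × ℤ → ℂ) :
    trigSum (freqSupport Λ c) c = trigSum Λ c := by
  funext r
  exact Finset.sum_filter_of_ne fun k _ hk hc => hk (by rw [hc, zero_mul])

theorem freqSupport_nonempty {Λ : Finset (ℤ × ℤ)} {c : ℤ × ℤ → ℂ} (h : trigSum Λ c ≠ 0) :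
    (freqSupport Λ c).Nonempty := by
  rw [Finset.nonempty_iff_ne_empty]
  intro h0
  apply h
  rw [← trigSum_freqSupport, h0]
  funext r
  simp [trigSum]

theorem add_natCast_mem_freqSupport {q : ℂ[X][Y]} {i j : ℕ} (h : (q.coeff j).coeff i ≠ 0)
    (s : ℤ × ℤ) :
    s + ((i : ℤ), (j : ℤ)) ∈ freqSupport (trigSupportOf q s) (trigCoeffOf q s) := by
  have := le_totalDegree h
  refine Finset.mem_filter.2 ⟨Finset.mem_image.2 ⟨(i, j), ?_, rfl⟩, ?_⟩
  · simp only [Finset.mem_product, Finset.mem_range]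
    omega
  · rwa [trigCoeffOf_add_natCast]

section Corners

variable (F : Finset (ℤ × ℤ)) (h : F.Nonempty)

def lowCorner : ℤ × ℤ :=
  ((F.image Prod.fst).min' (h.image _), (F.image Prod.snd).min' (h.image _))

def highCorner : ℤ × ℤ :=
  ((F.image Prod.fst).max' (h.image _), (F.image Prod.snd).max' (h.image _))

variable {F}

theorem lowCorner_le {k : ℤ × ℤ} (hk : k ∈ F) : lowCorner F h ≤ k :=
  ⟨Finset.min'_le _ _ (Finset.mem_image_of_mem _ hk),
    Finset.min'_le _ _ (Finset.mem_image_of_mem _ hk)⟩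

theorem le_highCorner {k : ℤ × ℤ} (hk : k ∈ F) : k ≤ highCorner F h :=
  ⟨Finset.le_max' _ _ (Finset.mem_image_of_mem _ hk),
    Finset.le_max' _ _ (Finset.mem_image_of_mem _ hk)⟩

theorem exists_fst_eq_lowCorner : ∃ k ∈ F, k.1 = (lowCorner F h).1 :=
  Finset.mem_image.1 (Finset.min'_mem _ (h.image _))

theorem exists_snd_eq_lowCorner : ∃ k ∈ F, k.2 = (lowCorner F h).2 :=
  Finset.mem_image.1 (Finset.min'_mem _ (h.image _))

end Corners

theorem degOf_eq {Λ : Finset (ℤ × ℤ)} {c : ℤ × ℤ → ℂ} (h : (freqSupport Λ c).Nonempty) :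
    degOf Λ c = highCorner _ h - lowCorner _ h := by
  change (WithBot.unbotD 0 ((freqSupport Λ c).image Prod.fst).max
      - WithTop.untopD 0 ((freqSupport Λ c).image Prod.fst).min,
    WithBot.unbotD 0 ((freqSupport Λ c).image Prod.snd).max
      - WithTop.untopD 0 ((freqSupport Λ c).image Prod.snd).min) = _
  rw [← Finset.coe_max' (h.image _), ← Finset.coe_min' (h.image _),
    ← Finset.coe_max' (h.image _), ← Finset.coe_min' (h.image _)]
  rfl

theorem degOf_ne_zero_of_ne {Λ : Finset (ℤ × ℤ)} {c : ℤ × ℤ → ℂ} {k k' : ℤ × ℤ}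
    (hk : k ∈ freqSupport Λ c) (hk' : k' ∈ freqSupport Λ c) (hne : k ≠ k') :
    degOf Λ c ≠ (0, 0) := by
  have h : (freqSupport Λ c).Nonempty := ⟨k, hk⟩
  rw [degOf_eq h, Prod.mk_zero_zero, Ne, sub_eq_zero]
  intro hc
  have hk := le_antisymm (hc ▸ le_highCorner h hk) (lowCorner_le h hk)
  have hk' := le_antisymm (hc ▸ le_highCorner h hk') (lowCorner_le h hk')
  exact hne (hk.trans hk'.symm)

section ToBivariate

variable {Λ : Finset (ℤ × ℤ)} {c : ℤ × ℤ → ℂ} (h : (freqSupport Λ c).Nonempty)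

def toBivariate : ℂ[X][Y] :=
  ∑ k ∈ freqSupport Λ c,
    monomial (k - lowCorner _ h).2.toNat (monomial (k - lowCorner _ h).1.toNat (c k))

theorem trigSum_eq_e2_mul_evalEval (r : ℝ × ℝ) :
    trigSum Λ c r =
      e2 (lowCorner _ h) r * (toBivariate h).evalEval (expTwoPiI r.1) (expTwoPiI r.2) := by
  rw [← trigSum_freqSupport, trigSum, toBivariate, evalEval_finsetSum, Finset.mul_sum]
  refine Finset.sum_congr rfl fun k hk => ?_
  have hk' := lowCorner_le h hk
  have he : e2 k r = e2 (lowCorner _ h) r * (expTwoPiI r.1 ^ (k - lowCorner _ h).1.toNat *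
      expTwoPiI r.2 ^ (k - lowCorner _ h).2.toNat) := by
    rw [← e2_natCast, ← e2_add]
    congr
    ext <;> simp [Prod.le_def] at hk' ⊢ <;> omega
  simp only [he, evalEval, eval_monomial, eval_mul, eval_pow, eval_C]
  ring

theorem trigSum_eq_zero_iff (r : ℝ × ℝ) :
    trigSum Λ c r = 0 ↔ (toBivariate h).evalEval (expTwoPiI r.1) (expTwoPiI r.2) = 0 := by
  rw [trigSum_eq_e2_mul_evalEval h, mul_eq_zero, or_iff_right (e2_ne_zero _ _)]

theorem coeff_toBivariate {k : ℤ × ℤ} (hk : k ∈ freqSupport Λ c) :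
    ((toBivariate h).coeff (k - lowCorner _ h).2.toNat).coeff (k - lowCorner _ h).1.toNat =
      c k := by
  rw [toBivariate, finsetSum_coeff, finsetSum_coeff, Finset.sum_eq_single k]
  · simp
  · intro k' hk' hne
    have := lowCorner_le h hk
    have := lowCorner_le h hk'
    rw [coeff_monomial, apply_ite (fun p : ℂ[X] => p.coeff _), coeff_monomial, coeff_zero]
    split_ifs with h1 h2 <;> try rfl
    exact absurd (Prod.ext (by simp [Prod.le_def] at *; omega)
      (by simp [Prod.le_def] at *; omega)) hne
  · exact fun hk' => absurd hk hk'

theorem toBivariate_ne_zero : toBivariate h ≠ 0 := by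
  obtain ⟨k, hk⟩ := h
  intro h0
  have := coeff_toBivariate ⟨k, hk⟩ hk
  rw [h0] at this
  exact (Finset.mem_filter.1 hk).2 (by simpa using this.symm)

theorem not_X_dvd_toBivariate : ¬ X ∣ toBivariate h := by
  obtain ⟨k, hk, hk2⟩ := exists_snd_eq_lowCorner h
  rw [X_dvd_iff]
  intro h0
  have := coeff_toBivariate h hk
  rw [Prod.snd_sub, hk2, sub_self, Int.toNat_zero, h0] at this
  exact (Finset.mem_filter.1 hk).2 (by simpa using this.symm)

theorem not_C_X_dvd_toBivariate : ¬ C X ∣ toBivariate h := by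
  obtain ⟨k, hk, hk1⟩ := exists_fst_eq_lowCorner h
  rw [C_dvd_iff_dvd_coeff]
  intro h0
  have := coeff_toBivariate h hk
  rw [Prod.fst_sub, hk1, sub_self, Int.toNat_zero, X_dvd_iff.1 (h0 _)] at this
  exact (Finset.mem_filter.1 hk).2 this.symm

theorem totalDegree_toBivariate_le :
    (totalDegree (toBivariate h) : ℤ) ≤ (degOf Λ c).1 + (degOf Λ c).2 := by
  rw [degOf_eq h]
  have h0 := (lowCorner_le h h.choose_spec).trans (le_highCorner h h.choose_spec)
  have hle : totalDegree (toBivariate h) ≤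
      ((highCorner _ h - lowCorner _ h).1 + (highCorner _ h - lowCorner _ h).2).toNat := by
    rw [totalDegree, toBivariate, map_sum]
    refine MvPolynomial.totalDegree_finsetSum_le fun k hk => ?_
    rw [equivMvPolynomial_monomial_monomial]
    refine (MvPolynomial.totalDegree_monomial_le _ _).trans ?_
    have := lowCorner_le h hk
    have := le_highCorner h hk
    simp only [Prod.le_def] at *
    simp [Finsupp.sum_add_index']
    omega
  simp only [Prod.le_def, Prod.fst_sub, Prod.snd_sub] at h0 hle ⊢
  omega

theorem trigDivides_of_dvd_toBivariate (hμ : trigSum Λ c ≠ 0) {q : ℂ[X][Y]}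
    (hq : q ∣ toBivariate h) :
    TrigDivides (trigSum (trigSupportOf q 0) (trigCoeffOf q 0)) (trigSum Λ c) := by
  obtain ⟨e, he⟩ := hq
  have hprod : trigSum Λ c = fun r => trigSum (trigSupportOf q 0) (trigCoeffOf q 0) r *
      trigSum (trigSupportOf e (lowCorner _ h)) (trigCoeffOf e (lowCorner _ h)) r := by
    funext r
    rw [trigSum_eq_e2_mul_evalEval h, he, trigSum_trigSupportOf, trigSum_trigSupportOf,
      evalEval_mul, e2_zero]
    ring
  refine ⟨_, ⟨⟨_, _, rfl⟩, fun h0 => hμ ?_⟩, hprod⟩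
  rw [hprod, h0]
  funext r
  exact mul_zero _

end ToBivariate

theorem TrigDivides.ne_zero {γ μ : ℝ × ℝ → ℂ} (h : TrigDivides γ μ) (hμ : μ ≠ 0) : γ ≠ 0 := by
  rintro rfl
  obtain ⟨η, -, rfl⟩ := h
  exact hμ (funext fun r => zero_mul (η r))

/-- A common factor `d` with a single monomial is a unit, since `toBivariate` is divisible by
neither `x` nor `y`; otherwise the trigonometric polynomial of `d` has positive degree. -/
theorem isRelPrime_toBivariate {Λ₁ Λ₂ : Finset (ℤ × ℤ)} {c₁ c₂ : ℤ × ℤ → ℂ}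
    (h₁ : (freqSupport Λ₁ c₁).Nonempty) (h₂ : (freqSupport Λ₂ c₂).Nonempty)
    (hμ₁ : trigSum Λ₁ c₁ ≠ 0) (hμ₂ : trigSum Λ₂ c₂ ≠ 0)
    (hcoprime : ¬ ∃ (Λγ : Finset (ℤ × ℤ)) (cγ : ℤ × ℤ → ℂ),
      trigSum Λγ cγ ≠ 0 ∧ degOf Λγ cγ ≠ (0, 0) ∧
      TrigDivides (trigSum Λγ cγ) (trigSum Λ₁ c₁) ∧
      TrigDivides (trigSum Λγ cγ) (trigSum Λ₂ c₂)) :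
    IsRelPrime (toBivariate h₁) (toBivariate h₂) := by
  intro d hd₁ hd₂
  by_contra hu
  by_cases hmono : ∀ p q : ℕ × ℕ,
      (d.coeff p.2).coeff p.1 ≠ 0 → (d.coeff q.2).coeff q.1 ≠ 0 → p = q
  · exact hu (isUnit_of_not_X_dvd_of_not_C_X_dvd
      (fun h => not_X_dvd_toBivariate h₁ (h.trans hd₁))
      (fun h => not_C_X_dvd_toBivariate h₁ (h.trans hd₁)) hmono)
  · simp only [not_forall] at hmono
    obtain ⟨p, q, hp, hq, hpq⟩ := hmono
    have hdiv₁ := trigDivides_of_dvd_toBivariate h₁ hμ₁ hd₁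
    refine hcoprime ⟨_, _, hdiv₁.ne_zero hμ₁, degOf_ne_zero_of_ne
      (add_natCast_mem_freqSupport hp 0) (add_natCast_mem_freqSupport hq 0) fun he => hpq ?_,
      hdiv₁, trigDivides_of_dvd_toBivariate h₂ hμ₂ hd₂⟩
    simpa [Prod.ext_iff] using he

theorem finite_and_ncard_commonZeros_trigSum_le {Λ₁ Λ₂ : Finset (ℤ × ℤ)} {c₁ c₂ : ℤ × ℤ → ℂ}
    (h₁ : (freqSupport Λ₁ c₁).Nonempty) (h₂ : (freqSupport Λ₂ c₂).Nonempty)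
    (hrel : IsRelPrime (toBivariate h₁) (toBivariate h₂)) :
    {r : ℝ × ℝ | r ∈ Ico (0:ℝ) 1 ×ˢ Ico (0:ℝ) 1 ∧ trigSum Λ₁ c₁ r = 0 ∧
      trigSum Λ₂ c₂ r = 0}.Finite ∧
    {r : ℝ × ℝ | r ∈ Ico (0:ℝ) 1 ×ˢ Ico (0:ℝ) 1 ∧ trigSum Λ₁ c₁ r = 0 ∧
      trigSum Λ₂ c₂ r = 0}.ncard ≤ totalDegree (toBivariate h₁) * totalDegree (toBivariate h₂) := by
  obtain ⟨hfin, hcard⟩ := finite_and_ncard_commonZeros_le (toBivariate_ne_zero h₁) hrel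
  let E : ℝ × ℝ → ℂ × ℂ := fun r => (expTwoPiI r.1, expTwoPiI r.2)
  have hmaps : MapsTo E {r | r ∈ Ico (0:ℝ) 1 ×ˢ Ico (0:ℝ) 1 ∧ trigSum Λ₁ c₁ r = 0 ∧
      trigSum Λ₂ c₂ r = 0} {p | (toBivariate h₁).evalEval p.1 p.2 = 0 ∧
        (toBivariate h₂).evalEval p.1 p.2 = 0} := fun r hr =>
    ⟨(trigSum_eq_zero_iff h₁ r).1 hr.2.1, (trigSum_eq_zero_iff h₂ r).1 hr.2.2⟩
  have hinj : InjOn E {r | r ∈ Ico (0:ℝ) 1 ×ˢ Ico (0:ℝ) 1 ∧ trigSum Λ₁ c₁ r = 0 ∧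
      trigSum Λ₂ c₂ r = 0} := fun r hr r' hr' he =>
    Prod.ext (injOn_expTwoPiI hr.1.1 hr'.1.1 (congrArg Prod.fst he))
      (injOn_expTwoPiI hr.1.2 hr'.1.2 (congrArg Prod.snd he))
  exact ⟨hfin.of_injOn hmaps hinj, (Set.ncard_le_ncard_of_injOn E hmaps hinj hfin).trans hcard⟩

/-- **Bézout for trigonometric polynomials.** If `μ₁, μ₂` are
trigonometric polynomials of degrees `(K₁,L₁)` and `(K₂,L₂)` with no common factor of
positive degree, then they have at most `(K₁+L₁)(K₂+L₂)` common zeros in `[0,1)²`. -/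
theorem stmt12 (Λ₁ Λ₂ : Finset (ℤ × ℤ)) (c₁ c₂ : ℤ × ℤ → ℂ) (μ₁ μ₂ : ℝ × ℝ → ℂ)
    (h₁ : μ₁ = trigSum Λ₁ c₁) (h₁0 : μ₁ ≠ 0)
    (h₂ : μ₂ = trigSum Λ₂ c₂) (h₂0 : μ₂ ≠ 0)
    (K₁ L₁ K₂ L₂ : ℤ)
    (hdeg₁ : degOf Λ₁ c₁ = (K₁, L₁)) (hdeg₂ : degOf Λ₂ c₂ = (K₂, L₂))
    (hcoprime : ¬ ∃ (Λγ : Finset (ℤ × ℤ)) (cγ : ℤ × ℤ → ℂ),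
      trigSum Λγ cγ ≠ 0 ∧ degOf Λγ cγ ≠ (0, 0) ∧
      TrigDivides (trigSum Λγ cγ) μ₁ ∧ TrigDivides (trigSum Λγ cγ) μ₂) :
    {r : ℝ × ℝ | r ∈ Set.Ico (0:ℝ) 1 ×ˢ Set.Ico (0:ℝ) 1 ∧ μ₁ r = 0 ∧ μ₂ r = 0}.Finite ∧
    (({r : ℝ × ℝ | r ∈ Set.Ico (0:ℝ) 1 ×ˢ Set.Ico (0:ℝ) 1 ∧ μ₁ r = 0 ∧ μ₂ r = 0}.ncard : ℤ)
      ≤ (K₁ + L₁) * (K₂ + L₂)) := by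
  subst h₁ h₂
  have hF₁ := freqSupport_nonempty h₁0
  have hF₂ := freqSupport_nonempty h₂0
  obtain ⟨hfin, hcard⟩ := finite_and_ncard_commonZeros_trigSum_le hF₁ hF₂
    (isRelPrime_toBivariate hF₁ hF₂ h₁0 h₂0 hcoprime)
  have hK₁ := hdeg₁ ▸ totalDegree_toBivariate_le hF₁
  have hK₂ := hdeg₂ ▸ totalDegree_toBivariate_le hF₂
  refine ⟨hfin, (Nat.cast_le.2 hcard).trans ?_⟩
  push_cast
  exact mul_le_mul hK₁ hK₂ (Nat.cast_nonneg _) ((Nat.cast_nonneg _).trans hK₁)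

end
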